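/- Let q be a prime power and let s, d, m be positive integers with d < sq. Then the evaluation map sending each polynomial P ∈ F_q[X_1,...,X_m] of total degree at most d to the tuple (P^{(i)}(a)) indexed by all points a ∈ F_q^m and all vectors i with wt(i) < s is injective. (Equivalently, the multiplicity code of order-s evaluations of degree-d polynomials in m variables over F_q has dimension binom(d+m, m) over F_q.) -/

import Mathlib

/-- The Hasse derivative of a multivariate polynomial `P` with respect to the index
vector `i : Fin m → ℕ`: the coefficient of `Z^i` in `P(X + Z)`. -/
noncomputable def mvHasseDeriv {F : Type*} [CommSemiring F] {m : ℕ}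
    (i : Fin m → ℕ) (P : MvPolynomial (Fin m) F) : MvPolynomial (Fin m) F :=
  MvPolynomial.coeff (Finsupp.equivFunOnFinite.symm i)
    (MvPolynomial.eval₂ (MvPolynomial.C.comp MvPolynomial.C)
      (fun k => MvPolynomial.C (MvPolynomial.X k) + MvPolynomial.X k) P)

/-- The multiplicity of `P` at a point `a`: the largest `M` (possibly `⊤`) such that
all Hasse derivatives of `P` of weight `< M` vanish at `a`. -/
noncomputable def mvMult {F : Type*} [CommSemiring F] {m : ℕ}
    (P : MvPolynomial (Fin m) F) (a : Fin m → F) : ℕ∞ :=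
  sSup {M : ℕ∞ | ∀ i : Fin m → ℕ, ((∑ k, i k : ℕ) : ℕ∞) < M →
    MvPolynomial.eval a (mvHasseDeriv i P) = 0}

/-!
This is the multiplicity Schwartz–Zippel lemma of Dvir, Kopparty, Saraf and Sudan. Let
`mult(P, a)` be the lowest degree of a monomial of `P(X + a)`; then
`∑_a mult(P, a) · q ≤ deg P · q^n` for nonzero `P` in `n` variables over `𝔽_q`. By induction on
`n`: write `P = ∑_{k ≤ t} p_k(X') X₀^k` and fix `a ∈ 𝔽_q^(n-1)`. If `X'^i` is a lowest-degree
monomial of `p_t(X' + a)`, its coefficient `Q(X₀)` in `P(X₀, X' + a)` is a nonzero polynomial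
of degree `t`, and `mult(P, (b, a)) ≤ |i| + mult_b(Q)` since shifting `X₀` by `b` commutes with
taking that coefficient. The root multiplicities of `Q` add up to at most `t`, and
`|i| = mult(p_t, a)` with `deg p_t + t ≤ deg P`.

Two polynomials of degree `≤ d` with the same Hasse derivatives of weight `< s` everywhere
differ by a polynomial of multiplicity `≥ s` at all `q^m` points, so `s q^m · q ≤ d q^m`,
against `d < s q`.
-/

lemma Finsupp.degree_cons {n : ℕ} (k : ℕ) (j : Fin n →₀ ℕ) :
    (Finsupp.cons k j).degree = k + j.degree := by
  simp [Finsupp.degree_eq_sum, Fin.sum_univ_succ]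

namespace Polynomial

variable {R A B : Type*} [CommSemiring R] [Semiring A] [Semiring B] [Algebra R A] [Algebra R B]

noncomputable def mapLinear (L : A →ₗ[R] B) (f : A[X]) : B[X] :=
  f.sum fun k c => monomial k (L c)

@[simp]
lemma coeff_mapLinear (L : A →ₗ[R] B) (f : A[X]) (k : ℕ) :
    (mapLinear L f).coeff k = L (f.coeff k) := by
  classical
  rw [mapLinear, Polynomial.sum_def, finsetSum_coeff]
  simp only [coeff_monomial, Finset.sum_ite_eq', mem_support_iff]
  split_ifs with h
  · rfl
  · rw [not_not.mp h, map_zero]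

lemma mapLinear_add (L : A →ₗ[R] B) (f g : A[X]) :
    mapLinear L (f + g) = mapLinear L f + mapLinear L g := by
  ext k; simp

lemma mapLinear_monomial (L : A →ₗ[R] B) (k : ℕ) (c : A) :
    mapLinear L (monomial k c) = monomial k (L c) := by
  ext j
  simp only [coeff_mapLinear, coeff_monomial]
  split_ifs <;> simp

lemma mapLinear_taylor (L : A →ₗ[R] B) (r : R) (f : A[X]) :
    mapLinear L (taylor (algebraMap R A r) f) = taylor (algebraMap R B r) (mapLinear L f) := by
  induction f using Polynomial.induction_on' with
  | add f g hf hg => rw [map_add, mapLinear_add, hf, hg, mapLinear_add, map_add]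
  | monomial k c =>
    have hpowA : (X + C (algebraMap R A r)) ^ k = ((X + C r) ^ k).map (algebraMap R A) := by simp
    have hpowB : (X + C (algebraMap R B r)) ^ k = ((X + C r) ^ k).map (algebraMap R B) := by simp
    ext j
    rw [mapLinear_monomial, taylor_monomial, taylor_monomial, hpowA, hpowB, coeff_mapLinear,
      coeff_C_mul, coeff_C_mul, coeff_map, coeff_map, ← Algebra.commutes, ← Algebra.smul_def,
      map_smul, Algebra.smul_def, Algebra.commutes]

lemma sum_rootMultiplicity_le_natDegree {R : Type*} [CommRing R] [IsDomain R]
    [Fintype R] (Q : Polynomial R) : ∑ b, Q.rootMultiplicity b ≤ Q.natDegree := by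
  classical
  calc ∑ b, Q.rootMultiplicity b = ∑ b, Q.roots.count b := by simp only [count_roots]
    _ = Multiset.card Q.roots := Multiset.sum_count_eq_card fun b _ => Finset.mem_univ b
    _ ≤ Q.natDegree := Q.card_roots'

end Polynomial

namespace MvPolynomial

section Translate

variable {σ R : Type*} [CommSemiring R]

noncomputable def translate (a : σ → R) : MvPolynomial σ R →ₐ[R] MvPolynomial σ R :=
  aeval fun k => X k + C (a k)

@[simp]
lemma translate_X (a : σ → R) (k : σ) : translate a (X k) = X k + C (a k) :=
  aeval_X _ _

lemma translate_translate (a b : σ → R) (P : MvPolynomial σ R) :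
    translate a (translate b P) = translate (a + b) P := by
  rw [← AlgHom.comp_apply]
  congr 1
  ext k
  simp [add_assoc]

lemma translate_zero (P : MvPolynomial σ R) : translate 0 P = P := by
  rw [← AlgHom.id_apply (R := R) P]
  congr 1
  ext k
  simp

lemma translate_injective {R : Type*} [CommRing R] (a : σ → R) :
    Function.Injective (translate a) :=
  Function.LeftInverse.injective (g := translate (-a)) fun P => by
    rw [translate_translate, neg_add_cancel, translate_zero]

lemma eval_mvHasseDeriv {n : ℕ} (a : Fin n → R) (i : Fin n → ℕ)
    (P : MvPolynomial (Fin n) R) :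
    eval a (mvHasseDeriv i P) = coeff (Finsupp.equivFunOnFinite.symm i) (translate a P) := by
  rw [mvHasseDeriv, ← coeff_map]
  congr 1
  rw [← coe_eval₂Hom, ← RingHom.comp_apply]
  refine DFunLike.congr_fun
    (?_ : (map (eval a)).comp (eval₂Hom (C.comp C) fun k => C (X k) + X k)
      = (translate a : MvPolynomial (Fin n) R →+* _)) P
  ext <;> simp [add_comm]

lemma finSuccEquiv_translate_cons {n : ℕ} (b : R) (a : Fin n → R)
    (P : MvPolynomial (Fin (n + 1)) R) :
    finSuccEquiv R n (translate (Fin.cons b a) P)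
      = Polynomial.taylor (C b) ((finSuccEquiv R n P).map (translate a)) := by
  refine DFunLike.congr_fun (?_ : (finSuccEquiv R n : _ →ₐ[R] _).comp (translate (Fin.cons b a))
    = ((Polynomial.taylorAlgHom (C b)).restrictScalars R).comp
      ((Polynomial.mapAlgHom (translate a)).comp (finSuccEquiv R n : _ →ₐ[R] _))) P
  ext k : 1
  cases k using Fin.cases <;>
    simp [Polynomial.taylor_apply, finSuccEquiv_apply]

end Translate

section VanishingOrder

variable {σ R : Type*} [CommSemiring R]

-- `sInf ∅ = 0`, so this is `0` at `Q = 0`.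
noncomputable def trailingTotalDegree (Q : MvPolynomial σ R) : ℕ :=
  sInf (Finsupp.degree '' (Q.support : Set (σ →₀ ℕ)))

lemma trailingTotalDegree_le_degree {Q : MvPolynomial σ R} {j : σ →₀ ℕ}
    (hj : j ∈ Q.support) : Q.trailingTotalDegree ≤ j.degree :=
  Nat.sInf_le ⟨j, hj, rfl⟩

lemma exists_degree_eq_trailingTotalDegree {Q : MvPolynomial σ R} (hQ : Q ≠ 0) :
    ∃ j ∈ Q.support, j.degree = Q.trailingTotalDegree :=
  Nat.sInf_mem ((Finset.coe_nonempty.mpr (support_nonempty.mpr hQ)).image _)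

lemma le_trailingTotalDegree {Q : MvPolynomial σ R} (hQ : Q ≠ 0) {k : ℕ}
    (h : ∀ j : σ →₀ ℕ, j.degree < k → coeff j Q = 0) : k ≤ Q.trailingTotalDegree := by
  obtain ⟨j, hj, hdeg⟩ := exists_degree_eq_trailingTotalDegree hQ
  by_contra! hlt
  exact mem_support_iff.mp hj (h j (hdeg ▸ hlt))

-- For `P ≠ 0` this is `mvMult P a`, by `eval_mvHasseDeriv`.
noncomputable def vanishingOrder (P : MvPolynomial σ R) (a : σ → R) : ℕ :=
  (translate a P).trailingTotalDegree

end VanishingOrder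

section SchwartzZippel

variable {R : Type*} [CommRing R] {n : ℕ}

lemma vanishingOrder_cons_le (P : MvPolynomial (Fin (n + 1)) R) (a : Fin n → R) (b : R)
    (i : Fin n →₀ ℕ)
    (hQ : ((finSuccEquiv R n P).map (translate a)).mapLinear (lcoeff R i) ≠ 0) :
    vanishingOrder P (Fin.cons b a) ≤ i.degree +
      (((finSuccEquiv R n P).map (translate a)).mapLinear (lcoeff R i)).rootMultiplicity b := by
  set Q := ((finSuccEquiv R n P).map (translate a)).mapLinear (lcoeff R i)
  have htaylor :
      Q.taylor b = (finSuccEquiv R n (translate (Fin.cons b a) P)).mapLinear (lcoeff R i) := by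
    rw [finSuccEquiv_translate_cons, ← algebraMap_eq, Polynomial.mapLinear_taylor]
    rfl
  have hcoeff :
      coeff (Finsupp.cons (Q.rootMultiplicity b) i) (translate (Fin.cons b a) P) ≠ 0 := by
    rw [Polynomial.rootMultiplicity_eq_natTrailingDegree, ← Polynomial.taylor_apply,
      ← finSuccEquiv_coeff_coeff, ← lcoeff_apply, ← Polynomial.coeff_mapLinear, ← htaylor]
    exact Polynomial.trailingCoeff_nonzero_iff_nonzero.mpr
      ((Polynomial.taylor_eq_zero b Q).not.mpr hQ)
  calc vanishingOrder P (Fin.cons b a)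
      ≤ (Finsupp.cons (Q.rootMultiplicity b) i).degree :=
        trailingTotalDegree_le_degree (mem_support_iff.mpr hcoeff)
    _ = i.degree + Q.rootMultiplicity b := by rw [Finsupp.degree_cons, add_comm]

lemma vanishingOrder_eq_zero_of_isEmpty {σ : Type*} [IsEmpty σ] {P : MvPolynomial σ R}
    (hP : P ≠ 0) (a : σ → R) : vanishingOrder P a = 0 := by
  obtain ⟨j, hj, -⟩ := exists_degree_eq_trailingTotalDegree
    ((map_ne_zero_iff _ (translate_injective a)).mpr hP)
  simpa [vanishingOrder, Subsingleton.elim j 0] using trailingTotalDegree_le_degree hj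

variable [IsDomain R] [Fintype R]

lemma sum_vanishingOrder_cons_le {P : MvPolynomial (Fin (n + 1)) R} (hP : P ≠ 0)
    (a : Fin n → R) :
    ∑ b, vanishingOrder P (Fin.cons b a) ≤
      Fintype.card R * vanishingOrder (finSuccEquiv R n P).leadingCoeff a
        + (finSuccEquiv R n P).natDegree := by
  set p := finSuccEquiv R n P
  have hp : p ≠ 0 := (map_ne_zero_iff _ (finSuccEquiv R n).injective).mpr hP
  obtain ⟨i, hi, hdeg⟩ := exists_degree_eq_trailingTotalDegree
    (map_ne_zero_iff _ (translate_injective a) |>.mpr (Polynomial.leadingCoeff_ne_zero.mpr hp))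
  set Q := (p.map (translate a)).mapLinear (lcoeff R i)
  have hQcoeff (k : ℕ) : Q.coeff k = coeff i (translate a (p.coeff k)) := by
    simp [Q, Polynomial.coeff_map]
  have hQ : Q ≠ 0 := fun h => mem_support_iff.mp hi (by
    rw [← Polynomial.coeff_natDegree, ← hQcoeff, h, Polynomial.coeff_zero])
  have hQdeg : Q.natDegree ≤ p.natDegree := Polynomial.natDegree_le_iff_coeff_eq_zero.mpr
    fun k hk => by rw [hQcoeff, Polynomial.coeff_eq_zero_of_natDegree_lt hk, map_zero, coeff_zero]
  calc ∑ b, vanishingOrder P (Fin.cons b a)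
      ≤ ∑ b, (vanishingOrder p.leadingCoeff a + Q.rootMultiplicity b) :=
        Finset.sum_le_sum fun b _ =>
          (vanishingOrder_cons_le P a b i hQ).trans_eq (by rw [hdeg]; rfl)
    _ = Fintype.card R * vanishingOrder p.leadingCoeff a + ∑ b, Q.rootMultiplicity b := by
        rw [Finset.sum_add_distrib, Finset.sum_const, Finset.card_univ, smul_eq_mul]
    _ ≤ Fintype.card R * vanishingOrder p.leadingCoeff a + p.natDegree := by
        grw [Q.sum_rootMultiplicity_le_natDegree, hQdeg]

theorem sum_vanishingOrder_mul_card_le {n : ℕ} {P : MvPolynomial (Fin n) R} (hP : P ≠ 0) :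
    (∑ a, vanishingOrder P a) * Fintype.card R ≤ P.totalDegree * Fintype.card R ^ n := by
  induction n with
  | zero => simp [vanishingOrder_eq_zero_of_isEmpty hP]
  | succ n ih =>
    set q := Fintype.card R
    set p := finSuccEquiv R n P
    have hp : p ≠ 0 := (map_ne_zero_iff _ (finSuccEquiv R n).injective).mpr hP
    have hdeg : p.leadingCoeff.totalDegree + p.natDegree ≤ P.totalDegree :=
      totalDegree_coeff_finSuccEquiv_add_le P _ (Polynomial.leadingCoeff_ne_zero.mpr hp)
    have hsum : ∑ A, vanishingOrder P A ≤
        q * ∑ a, vanishingOrder p.leadingCoeff a + q ^ n * p.natDegree :=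
      calc ∑ A, vanishingOrder P A = ∑ a, ∑ b, vanishingOrder P (Fin.cons b a) := by
            rw [← Fintype.sum_equiv (Fin.consEquiv fun _ => R)
                (fun ba => vanishingOrder P (Fin.cons ba.1 ba.2)) _ fun _ => rfl,
              Fintype.sum_prod_type, Finset.sum_comm]
        _ ≤ ∑ a, (q * vanishingOrder p.leadingCoeff a + p.natDegree) :=
            Finset.sum_le_sum fun a _ => sum_vanishingOrder_cons_le hP a
        _ = q * ∑ a, vanishingOrder p.leadingCoeff a + q ^ n * p.natDegree := by
            simp [Finset.sum_add_distrib, Finset.mul_sum, q]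
    have ih' := ih (Polynomial.leadingCoeff_ne_zero.mpr hp)
    calc (∑ A, vanishingOrder P A) * q
        ≤ (q * ∑ a, vanishingOrder p.leadingCoeff a + q ^ n * p.natDegree) * q := by gcongr
      _ ≤ (p.leadingCoeff.totalDegree + p.natDegree) * q ^ (n + 1) := by
        rw [pow_succ]; nlinarith
      _ ≤ P.totalDegree * q ^ (n + 1) := by gcongr

end SchwartzZippel

end MvPolynomial

open MvPolynomial

theorem multiplicity_code_injective_general {F : Type*} [Field F] [Fintype F] {m : ℕ}
    (s d : ℕ)
    (hdq : d < s * Fintype.card F) :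
    Function.Injective
      (fun P : {P : MvPolynomial (Fin m) F // P.totalDegree ≤ d} =>
        fun (a : Fin m → F) (i : {i : Fin m → ℕ // ∑ k, i k < s}) =>
          MvPolynomial.eval a (mvHasseDeriv i.1 P.1)) := by
  intro P P' h
  by_contra hne
  set D := P.1 - P'.1
  have hD : D ≠ 0 := sub_ne_zero.mpr (Subtype.coe_ne_coe.mpr hne)
  have hvanish (a : Fin m → F) : s ≤ vanishingOrder D a := by
    refine le_trailingTotalDegree ((map_ne_zero_iff _ (translate_injective a)).mpr hD)
      fun j hj => ?_
    have hPP' := congr_fun (congr_fun h a) ⟨j, by rwa [← Finsupp.degree_eq_sum]⟩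
    simp only [eval_mvHasseDeriv, Finsupp.equivFunOnFinite_symm_coe] at hPP'
    rw [map_sub, coeff_sub, hPP', sub_self]
  have hq : 0 < Fintype.card F ^ m := pow_pos Fintype.card_pos _
  have hsz := sum_vanishingOrder_mul_card_le hD
  have hsum : s * Fintype.card F ^ m ≤ ∑ a, vanishingOrder D a := by
    simpa [mul_comm] using Finset.card_nsmul_le_sum Finset.univ _ s fun a _ => hvanish a
  have hdeg : D.totalDegree ≤ d := (totalDegree_sub _ _).trans (max_le P.2 P'.2)
  have : s * Fintype.card F * Fintype.card F ^ m ≤ d * Fintype.card F ^ m := by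
    nlinarith
  exact absurd (Nat.le_of_mul_le_mul_right this hq) (not_le.mpr hdq)

/-- **Injectivity of the multiplicity-code encoding map.**
For positive integers `s, d, m` with `d < sq`, the map sending a polynomial
`P ∈ F_q[X_1,…,X_m]` of total degree at most `d` to the tuple of evaluations `P^{(i)}(a)`,
over all `a ∈ F_q^m` and all `i` with `wt(i) < s`, is injective. -/
theorem multiplicity_code_injective {F : Type*} [Field F] [Fintype F] {m : ℕ}
    (s d : ℕ) (hs : 0 < s) (hd : 0 < d) (hm : 0 < m)
    (hdq : d < s * Fintype.card F) :
    Function.Injective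
      (fun P : {P : MvPolynomial (Fin m) F // P.totalDegree ≤ d} =>
        fun (a : Fin m → F) (i : {i : Fin m → ℕ // ∑ k, i k < s}) =>
          MvPolynomial.eval a (mvHasseDeriv i.1 P.1)) :=
  multiplicity_code_injective_general s d hdq
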